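/- Let U ⊆ [0,∞) be an open, unbounded set. Then there exists h > 0 such that n·h ∈ U for infinitely many natural numbers n. -/
import Mathlib


/-- If `U ⊆ [0,∞)` is open and unbounded, there exists `h > 0`
such that `n·h ∈ U` for infinitely many natural numbers `n`. -/
theorem largest_fragment_stmt0 (U : Set ℝ) (hU : IsOpen U) (hsub : U ⊆ Set.Ici 0)
    (hunb : ¬ BddAbove U) :
    ∃ h : ℝ, 0 < h ∧ {n : ℕ | (n : ℝ) * h ∈ U}.Infinite := by
  have hunb' := not_bddAbove_iff.1 hunb
  set S : ℕ → Set ℝ := fun N =>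
    {h : ℝ | ∃ n : ℕ, N ≤ n ∧ (n : ℝ) * h ∈ U} ∪ Set.Iio 1 with hS
  have hSopen : ∀ N, IsOpen (S N) := by
    intro N
    apply IsOpen.union _ isOpen_Iio
    have : {h : ℝ | ∃ n : ℕ, N ≤ n ∧ (n : ℝ) * h ∈ U}
        = ⋃ n ∈ {n : ℕ | N ≤ n}, (fun h : ℝ => (n : ℝ) * h) ⁻¹' U := by
      ext h; simp [Set.mem_iUnion]
    rw [this]
    exact isOpen_biUnion fun n _ => hU.preimage (continuous_const.mul continuous_id)
  have hSdense : ∀ N, Dense (S N) := by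
    intro N
    rw [dense_iff_inter_open]
    intro V hV ⟨x, hx⟩
    rcases lt_or_ge x 1 with hx1 | hx1
    · exact ⟨x, hx, Or.inr hx1⟩
    · -- find interval (a,b) around x with 1 ≤ a
      obtain ⟨ε, hε, hball⟩ := Metric.isOpen_iff.1 hV x hx
      set a := x - ε/2 with ha
      set b := x + ε/2 with hb
      clear_value a b
      have hab : a < b := by rw [ha, hb]; linarith
      have hIoo : Set.Ioo a b ⊆ V := by
        intro y hy
        obtain ⟨h1, h2⟩ := hy
        rw [ha] at h1; rw [hb] at h2
        apply hball
        rw [Real.ball_eq_Ioo]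
        exact ⟨by linarith, by linarith⟩
      -- replace a by a' := max a ((x+a)/2) ... simpler: a' := max a (x/2), still < x... need a' < b and positive.
      set a' := max a (x/2) with ha'
      clear_value a'
      have haa' : a ≤ a' := by rw [ha']; exact le_max_left _ _
      have ha'pos : 0 < a' := by
        rw [ha']; exact lt_max_of_lt_right (by linarith)
      have ha'b : a' < b := by
        rw [ha']; exact max_lt (by rw [ha, hb] at hab ⊢; linarith)
          (by rw [hb]; linarith)
      have hsubI : Set.Ioo a' b ⊆ V := fun y hy =>
        hIoo ⟨lt_of_le_of_lt haa' hy.1, hy.2⟩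
      -- choose a'' strictly between a' and b
      set a'' := (a' + b) / 2 with ha''
      clear_value a''
      have h1 : a' < a'' := by rw [ha'']; linarith
      have h2 : a'' < b := by rw [ha'']; linarith
      have ha''pos : 0 < a'' := lt_trans ha'pos h1
      -- choose M ≥ N with M > a'' / (b - a'') and M ≥ 1
      obtain ⟨M, hM⟩ := exists_nat_gt (max (max (N : ℝ) (a'' / (b - a''))) 1)
      have hMN : (N : ℝ) < M := lt_of_le_of_lt (le_max_of_le_left (le_max_left _ _)) hM
      have hMfrac : a'' / (b - a'') < M :=
        lt_of_le_of_lt (le_max_of_le_left (le_max_right _ _)) hM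
      have hM1 : (1 : ℝ) < M := lt_of_le_of_lt (le_max_right _ _) hM
      -- pick u ∈ U with u > M * a''
      obtain ⟨u, huU, hu⟩ := hunb' ((M : ℝ) * a'')
      -- n = ⌊u / a''⌋₊
      have hupos : 0 < u := lt_trans (by positivity) hu
      set n := ⌊u / a''⌋₊ with hn
      have hMn : (M : ℝ) ≤ n := by
        have : (M : ℝ) ≤ u / a'' := le_of_lt ((lt_div_iff₀ ha''pos).2 (by linarith [hu]))
        calc (M : ℝ) = (M : ℕ) := by norm_num
          _ ≤ (⌊u / a''⌋₊ : ℝ) := by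
              exact_mod_cast Nat.le_floor (by exact_mod_cast this)
      have hnpos : (0 : ℝ) < n := lt_of_lt_of_le (by linarith) hMn
      have hfl : (n : ℝ) ≤ u / a'' := Nat.floor_le (by positivity)
      have hfl2 : u / a'' < n + 1 := Nat.lt_floor_add_one _
      -- so n * a'' ≤ u < (n+1) * a''
      have hlow : (n : ℝ) * a'' ≤ u := by
        rw [← le_div_iff₀ ha''pos] at *; exact hfl
      have hhigh : u < ((n : ℝ) + 1) * a'' := by
        rw [← div_lt_iff₀ ha''pos]; exact hfl2
      -- h := u / n ∈ [a'', a'' + a''/n) ⊆ (a', b)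
      set h := u / n with hh
      have hha : a'' ≤ h := (le_div_iff₀ hnpos).2 (by linarith [hlow])
      have hnb : a'' < (n : ℝ) * (b - a'') := by
        have hba : (0 : ℝ) < b - a'' := by linarith
        have : a'' / (b - a'') < n := lt_of_lt_of_le hMfrac hMn
        calc a'' = (a'' / (b - a'')) * (b - a'') := by field_simp
          _ < (n : ℝ) * (b - a'') := mul_lt_mul_of_pos_right this hba
      have hhb : h < b := by
        rw [hh, div_lt_iff₀ hnpos]
        calc u < (n : ℝ) * a'' + a'' := by linarith [hhigh]
          _ < (n : ℝ) * a'' + (n : ℝ) * (b - a'') := by linarith [hnb]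
          _ = b * n := by ring
      have hmem : h ∈ V := hsubI ⟨lt_of_lt_of_le h1 hha, hhb⟩
      refine ⟨h, hmem, Or.inl ⟨n, ?_, ?_⟩⟩
      · exact_mod_cast le_of_lt (lt_of_lt_of_le hMN hMn)
      · have : (n : ℝ) * h = u := by
          rw [hh]; field_simp
        rw [this]; exact huU
  have hdense : Dense (⋂ N, S N) := dense_iInter_of_isOpen hSopen hSdense
  obtain ⟨h, hhI, hhV⟩ := dense_iff_inter_open.1 hdense (Set.Ioi 1) isOpen_Ioi
    ⟨2, by norm_num⟩
  have hh1 : (1 : ℝ) < h := hhI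
  refine ⟨h, by linarith, ?_⟩
  rw [← Nat.frequently_atTop_iff_infinite, Filter.frequently_atTop]
  intro N
  rcases Set.mem_iInter.1 hhV N with hmem | hlt
  · obtain ⟨n, hn1, hn2⟩ := hmem
    exact ⟨n, hn1, hn2⟩
  · exact absurd hlt (by simp only [Set.mem_Iio, not_lt]; linarith)
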